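/- Suppose ℓ is twice continuously differentiable with ℓ'' > 0, and the step size satisfies η ≤ 1/(2R(w_0)) and R(w_{t+1}) − R(w_t) ≤ −(η/2)‖∇R(w_t)‖² for all t. Then the projections onto S of both the gradient descent path and the regularization path converge to the unique minimizer v̄ of R_s over S: lim_{t→∞} Π_S w_t = v̄ and lim_{B→∞} Π_S w̄(B) = v̄. -/

import Mathlib

/-!
On `S` the partial risk `R_s` is strictly convex (`ℓ` is, and a vector of `S` orthogonal to every
`xᵢ`, `i ∈ D_s`, vanishes), so `v̄` is a strict minimizer. Comparing with the minimum of `R_s` on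
the compact sphere of radius `ε` around `v̄` and using convexity along segments from `v̄`, this
becomes a sharp minimum: `R_s v ≥ R_s v̄ + δ ‖v - v̄‖` whenever `‖v - v̄‖ ≥ ε`. The projection `Π_S`
changes neither `R_s` nor its gradient, and `R_s ≤ R`.

Along gradient descent the squared gradient norms are summable, so `∇R(w_t) → 0`. Pairing `∇R`
with a direction `u` that separates a point of `D_c` bounds that point's `-ℓ'` by `‖∇R‖`, so the
`D_c` part of the gradient vanishes and `∇R_s(w_t) → 0`; convexity then gives
`R_s(Π_S w_t) - R_s v̄ ≤ ‖∇R_s(w_t)‖ ‖Π_S w_t - v̄‖`, which sharpness turns into `Π_S w_t → v̄`.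
Along the regularization path, moving from `v̄` far in a direction separating all of `D_c` drives
the `D_c` part of `R` to `0` without increasing `R_s`, so `R_s(Π_S w̄(B)) ≤ R(w̄(B)) → R_s v̄`.
-/

open Filter Topology RealInnerProductSpace Submodule

theorem ConvexOn.add_deriv_mul_sub_le {ℓ : ℝ → ℝ} (hℓ : ConvexOn ℝ Set.univ ℓ)
    (hd : Differentiable ℝ ℓ) (a b : ℝ) : ℓ a + deriv ℓ a * (b - a) ≤ ℓ b := by
  rcases lt_trichotomy a b with hab | rfl | hab
  · have h := hℓ.deriv_le_slope trivial trivial hab (hd a)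
    rw [slope_def_field, le_div_iff₀ (sub_pos.2 hab)] at h
    linarith
  · simp
  · have h := hℓ.slope_le_deriv trivial trivial hab (hd a)
    rw [slope_def_field, div_le_iff₀ (sub_pos.2 hab)] at h
    nlinarith

theorem tendsto_zero_of_sub_le_neg_mul {a b : ℕ → ℝ} {c : ℝ} (hc : 0 < c) (ha : ∀ t, 0 ≤ a t)
    (hb : ∀ t, 0 ≤ b t) (h : ∀ t, a (t + 1) - a t ≤ -c * b t) : Tendsto b atTop (𝓝 0) := by
  refine (summable_of_sum_range_le (c := a 0 / c) hb fun T => ?_).tendsto_atTop_zero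
  rw [le_div_iff₀ hc, Finset.sum_mul]
  calc ∑ t ∈ Finset.range T, b t * c
      ≤ ∑ t ∈ Finset.range T, (a t - a (t + 1)) :=
        Finset.sum_le_sum fun t _ => by linarith [h t]
    _ = a 0 - a T := Finset.sum_range_sub' a T
    _ ≤ a 0 := by linarith [ha T]

section StrictConvex

variable {E : Type*} [NormedAddCommGroup E] [NormedSpace ℝ E] {K : Set E} {f : E → ℝ} {x₀ : E}

theorem StrictConvexOn.lt_of_isMinOn {v : E} (hf : StrictConvexOn ℝ K f) (hmin : IsMinOn f K x₀)
    (hx₀ : x₀ ∈ K) (hv : v ∈ K) (hne : v ≠ x₀) : f x₀ < f v :=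
  lt_of_not_ge fun hle =>
    hne (hf.eq_of_isMinOn (isMinOn_iff.2 fun _ hu => hle.trans (hmin hu)) hmin hv hx₀)

variable [ProperSpace E]

theorem StrictConvexOn.exists_pos_add_mul_dist_le (hf : StrictConvexOn ℝ K f) (hK : IsClosed K)
    (hfc : ContinuousOn f K) (hx₀ : x₀ ∈ K) (hmin : IsMinOn f K x₀) {ε : ℝ} (hε : 0 < ε) :
    ∃ δ > 0, ∀ v ∈ K, ε ≤ dist v x₀ → f x₀ + δ * dist v x₀ ≤ f v := by
  have hpoint : ∀ v ∈ K, ε ≤ dist v x₀ →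
      ∃ p ∈ K ∩ Metric.sphere x₀ ε, f p ≤ f x₀ + ε / dist v x₀ * (f v - f x₀) := by
    intro v hv hvd
    have hD : 0 < dist v x₀ := hε.trans_le hvd
    set θ := ε / dist v x₀
    have hθ0 : 0 ≤ θ := by positivity
    have hθ1 : θ ≤ 1 := div_le_one_of_le₀ hvd hD.le
    refine ⟨(1 - θ) • x₀ + θ • v, ⟨hf.1 hx₀ hv (sub_nonneg.2 hθ1) hθ0 (by ring), ?_⟩, ?_⟩
    · rw [mem_sphere_iff_norm, show (1 - θ) • x₀ + θ • v - x₀ = θ • (v - x₀) by module,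
        norm_smul, Real.norm_of_nonneg hθ0, ← dist_eq_norm, div_mul_cancel₀ _ hD.ne']
    · have h := hf.convexOn.2 hx₀ hv (sub_nonneg.2 hθ1) hθ0 (by ring)
      simp only [smul_eq_mul] at h
      linarith
  by_cases hT : (K ∩ Metric.sphere x₀ ε).Nonempty
  · obtain ⟨p₀, hp₀, hp₀min⟩ :=
      ((isCompact_sphere x₀ ε).inter_left hK).exists_isMinOn hT (hfc.mono Set.inter_subset_left)
    have hp₀ne : p₀ ≠ x₀ := by
      rintro rfl
      simp [hε.ne] at hp₀
    have hgap : f x₀ < f p₀ := hf.lt_of_isMinOn hmin hx₀ hp₀.1 hp₀ne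
    refine ⟨(f p₀ - f x₀) / ε, div_pos (sub_pos.2 hgap) hε, fun v hv hvd => ?_⟩
    obtain ⟨p, hp, hfp⟩ := hpoint v hv hvd
    have hD : 0 < dist v x₀ := hε.trans_le hvd
    have key : (f p₀ - f x₀) * dist v x₀ ≤ ε * (f v - f x₀) := by
      have h := (hp₀min hp).trans hfp
      rw [div_mul_eq_mul_div, ← sub_le_iff_le_add', le_div_iff₀ hD] at h
      linarith
    rw [div_mul_eq_mul_div, ← le_sub_iff_add_le', div_le_iff₀ hε]
    linarith
  · exact ⟨1, one_pos, fun v hv hvd => absurd ((hpoint v hv hvd).imp fun _ h => h.1) hT⟩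

variable {α : Type*} {l : Filter α} {v : α → E}

theorem StrictConvexOn.tendsto_of_tendsto_apply (hf : StrictConvexOn ℝ K f) (hK : IsClosed K)
    (hfc : ContinuousOn f K) (hx₀ : x₀ ∈ K) (hmin : IsMinOn f K x₀) (hv : ∀ a, v a ∈ K)
    (hfv : Tendsto (fun a => f (v a)) l (𝓝 (f x₀))) : Tendsto v l (𝓝 x₀) := by
  rw [Metric.tendsto_nhds]
  intro ε hε
  obtain ⟨δ, hδ, hgrowth⟩ := hf.exists_pos_add_mul_dist_le hK hfc hx₀ hmin hε
  filter_upwards [hfv.eventually (gt_mem_nhds (lt_add_of_pos_right (f x₀) (mul_pos hδ hε)))]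
    with a ha
  by_contra! hd
  nlinarith [hgrowth (v a) (hv a) hd]

theorem StrictConvexOn.tendsto_of_sub_le_mul_dist (hf : StrictConvexOn ℝ K f) (hK : IsClosed K)
    (hfc : ContinuousOn f K) (hx₀ : x₀ ∈ K) (hmin : IsMinOn f K x₀) (hv : ∀ a, v a ∈ K)
    {g : α → ℝ} (hg : Tendsto g l (𝓝 0)) (hfv : ∀ a, f (v a) - f x₀ ≤ g a * dist (v a) x₀) :
    Tendsto v l (𝓝 x₀) := by
  rw [Metric.tendsto_nhds]
  intro ε hε
  obtain ⟨δ, hδ, hgrowth⟩ := hf.exists_pos_add_mul_dist_le hK hfc hx₀ hmin hε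
  filter_upwards [hg.eventually (gt_mem_nhds hδ)] with a ha
  by_contra! hd
  have hD : 0 < dist (v a) x₀ := hε.trans_le hd
  nlinarith [hgrowth (v a) (hv a) hd, hfv a]

end StrictConvex

theorem eq_zero_of_mem_span_of_forall_inner_eq_zero {E : Type*} [NormedAddCommGroup E]
    [InnerProductSpace ℝ E] {s : Set E} {z : E} (hz : z ∈ span ℝ s)
    (h : ∀ u ∈ s, ⟪z, u⟫ = 0) : z = 0 := by
  have hle : span ℝ s ≤ (ℝ ∙ z)ᗮ :=
    span_le.2 fun u hu => mem_orthogonal_singleton_iff_inner_right.2 (h u hu)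
  exact inner_self_eq_zero.1 (mem_orthogonal_singleton_iff_inner_right.1 (hle hz))

section MarginRisk

variable {E ι : Type*} [NormedAddCommGroup E] [InnerProductSpace ℝ E]
  (ℓ : ℝ → ℝ) (x : ι → E) (y : ι → ℝ)

/-- With `c = 1 / n` this is `R` for `T = univ` and `R_s` for `T = D_s`. -/
def marginRisk (c : ℝ) (T : Finset ι) (w : E) : ℝ :=
  c * ∑ i ∈ T, ℓ (y i * ⟪w, x i⟫)

noncomputable def marginGrad (c : ℝ) (T : Finset ι) (w : E) : E :=
  c • ∑ i ∈ T, (deriv ℓ (y i * ⟪w, x i⟫) * y i) • x i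

variable {ℓ x y} {c : ℝ} {T : Finset ι}

theorem hasGradientAt_marginRisk [CompleteSpace E] (hd : Differentiable ℝ ℓ) (c : ℝ)
    (T : Finset ι) (w : E) : HasGradientAt (marginRisk ℓ x y c T) (marginGrad ℓ x y c T w) w := by
  have hterm : ∀ i, HasFDerivAt (fun v : E => ℓ (y i * ⟪v, x i⟫))
      ((deriv ℓ (y i * ⟪w, x i⟫) * y i) • innerSL ℝ (x i)) w := by
    intro i
    have hlin : HasFDerivAt (fun v : E => y i * ⟪v, x i⟫) (y i • innerSL ℝ (x i)) w := by
      simp_rw [real_inner_comm (x i)]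
      exact (y i • innerSL ℝ (x i)).hasFDerivAt
    rw [← smul_smul]
    exact (hd _).hasDerivAt.comp_hasFDerivAt w hlin
  have hdual : InnerProductSpace.toDual ℝ E (marginGrad ℓ x y c T w) =
      c • ∑ i ∈ T, (deriv ℓ (y i * ⟪w, x i⟫) * y i) • innerSL ℝ (x i) := by
    ext v
    simp [marginGrad, real_inner_comm]
  rw [hasGradientAt_iff_hasFDerivAt, hdual]
  exact (HasFDerivAt.fun_sum fun i _ => hterm i).const_mul c

theorem continuous_marginRisk (hℓ : Continuous ℓ) : Continuous (marginRisk ℓ x y c T) := by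
  unfold marginRisk
  fun_prop

theorem marginRisk_nonneg (hℓ : ∀ z, 0 ≤ ℓ z) (hc : 0 ≤ c) (w : E) :
    0 ≤ marginRisk ℓ x y c T w :=
  mul_nonneg hc (Finset.sum_nonneg fun _ _ => hℓ _)

theorem marginRisk_mono (hℓ : ∀ z, 0 ≤ ℓ z) (hc : 0 ≤ c) {T' : Finset ι} (hT : T ⊆ T') (w : E) :
    marginRisk ℓ x y c T w ≤ marginRisk ℓ x y c T' w :=
  mul_le_mul_of_nonneg_left (Finset.sum_le_sum_of_subset_of_nonneg hT fun _ _ _ => hℓ _) hc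

theorem marginRisk_add_compl [Fintype ι] [DecidableEq ι] (w : E) :
    marginRisk ℓ x y c T w + marginRisk ℓ x y c Tᶜ w = marginRisk ℓ x y c Finset.univ w := by
  simp only [marginRisk, ← mul_add, Finset.sum_add_sum_compl]

theorem marginGrad_add_compl [Fintype ι] [DecidableEq ι] (w : E) :
    marginGrad ℓ x y c T w + marginGrad ℓ x y c Tᶜ w = marginGrad ℓ x y c Finset.univ w := by
  simp only [marginGrad, ← smul_add, Finset.sum_add_sum_compl]

theorem marginRisk_congr {v w : E} (h : ∀ i ∈ T, ⟪v, x i⟫ = ⟪w, x i⟫) :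
    marginRisk ℓ x y c T v = marginRisk ℓ x y c T w := by
  simp only [marginRisk]
  exact congrArg _ (Finset.sum_congr rfl fun i hi => by rw [h i hi])

theorem marginGrad_congr {v w : E} (h : ∀ i ∈ T, ⟪v, x i⟫ = ⟪w, x i⟫) :
    marginGrad ℓ x y c T v = marginGrad ℓ x y c T w := by
  simp only [marginGrad]
  exact congrArg _ (Finset.sum_congr rfl fun i hi => by rw [h i hi])

theorem inner_starProjection_span_image [FiniteDimensional ℝ E] (w : E) {i : ι} (hi : i ∈ T) :
    ⟪(span ℝ (x '' T)).starProjection w, x i⟫ = ⟪w, x i⟫ := by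
  rw [inner_starProjection_left_eq_right,
    starProjection_eq_self_iff.2 (subset_span (Set.mem_image_of_mem x hi))]

theorem marginGrad_mem_span (w : E) : marginGrad ℓ x y c T w ∈ span ℝ (x '' T) :=
  smul_mem _ _ (sum_mem fun _ hi => smul_mem _ _ (subset_span (Set.mem_image_of_mem x hi)))

theorem marginRisk_sub_le_inner (hℓ : ConvexOn ℝ Set.univ ℓ) (hd : Differentiable ℝ ℓ)
    (hc : 0 ≤ c) (v w : E) :
    marginRisk ℓ x y c T v - marginRisk ℓ x y c T w ≤ ⟪marginGrad ℓ x y c T v, v - w⟫ := by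
  have hinner : ⟪marginGrad ℓ x y c T v, v - w⟫ =
      c * ∑ i ∈ T, deriv ℓ (y i * ⟪v, x i⟫) * (y i * ⟪v, x i⟫ - y i * ⟪w, x i⟫) := by
    simp only [marginGrad, real_inner_smul_left, sum_inner]
    congr 1
    refine Finset.sum_congr rfl fun i _ => ?_
    rw [inner_sub_right, real_inner_comm (x i) v, real_inner_comm (x i) w]
    ring
  rw [hinner, marginRisk, marginRisk, ← mul_sub, ← Finset.sum_sub_distrib]
  refine mul_le_mul_of_nonneg_left (Finset.sum_le_sum fun i _ => ?_) hc
  linear_combination hℓ.add_deriv_mul_sub_le hd (y i * ⟪v, x i⟫) (y i * ⟪w, x i⟫)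

theorem strictConvexOn_marginRisk (hℓ : StrictConvexOn ℝ Set.univ ℓ) (hc : 0 < c)
    (hy : ∀ i ∈ T, y i ≠ 0) : StrictConvexOn ℝ (span ℝ (x '' T)) (marginRisk ℓ x y c T) := by
  refine ⟨(span ℝ (x '' T)).convex, fun u hu v hv huv a b ha hb hab => ?_⟩
  obtain ⟨i₀, hi₀, hne⟩ : ∃ i ∈ T, ⟪u, x i⟫ ≠ ⟪v, x i⟫ := by
    by_contra! h
    refine huv (sub_eq_zero.1 (eq_zero_of_mem_span_of_forall_inner_eq_zero (sub_mem hu hv) ?_))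
    rintro _ ⟨i, hi, rfl⟩
    rw [inner_sub_left, h i hi, sub_self]
  have hmargin : ∀ i, y i * ⟪a • u + b • v, x i⟫ = a • (y i * ⟪u, x i⟫) + b • (y i * ⟪v, x i⟫) :=
    fun i => by simp only [inner_add_left, real_inner_smul_left, smul_eq_mul]; ring
  have hlt : ∑ i ∈ T, ℓ (y i * ⟪a • u + b • v, x i⟫) <
      ∑ i ∈ T, (a • ℓ (y i * ⟪u, x i⟫) + b • ℓ (y i * ⟪v, x i⟫)) := by
    refine Finset.sum_lt_sum (fun i _ => ?_) ⟨i₀, hi₀, ?_⟩ <;> rw [hmargin]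
    · exact hℓ.convexOn.2 trivial trivial ha.le hb.le hab
    · exact hℓ.2 trivial trivial (fun h => hne (mul_left_cancel₀ (hy i₀ hi₀) h)) ha hb hab
  simp only [marginRisk, smul_eq_mul, Finset.sum_add_distrib, ← Finset.mul_sum] at hlt ⊢
  nlinarith

theorem exists_margin_nonneg_and_pos {C : Finset ι}
    (h : ∀ i ∈ C, ∃ u : E, 0 < y i * ⟪u, x i⟫ ∧ ∀ j, 0 ≤ y j * ⟪u, x j⟫) :
    ∃ u : E, (∀ j, 0 ≤ y j * ⟪u, x j⟫) ∧ ∀ i ∈ C, 0 < y i * ⟪u, x i⟫ := by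
  choose! u hupos hunn using h
  have hsum : ∀ j, y j * ⟪∑ i ∈ C, u i, x j⟫ = ∑ i ∈ C, y j * ⟪u i, x j⟫ := fun j => by
    rw [sum_inner, Finset.mul_sum]
  refine ⟨∑ i ∈ C, u i, fun j => ?_, fun j hj => ?_⟩ <;> rw [hsum]
  · exact Finset.sum_nonneg fun i hi => hunn i hi j
  · exact Finset.sum_pos' (fun i hi => hunn i hi j) ⟨j, hj, hupos j hj⟩

theorem neg_deriv_mul_margin_le (hℓ' : ∀ z, deriv ℓ z ≤ 0) (hc : 0 ≤ c) {u : E}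
    (hu : ∀ j ∈ T, 0 ≤ y j * ⟪u, x j⟫) {i : ι} (hi : i ∈ T) (w : E) :
    c * (-deriv ℓ (y i * ⟪w, x i⟫) * (y i * ⟪u, x i⟫)) ≤ ‖u‖ * ‖marginGrad ℓ x y c T w‖ := by
  have hinner : ⟪u, marginGrad ℓ x y c T w⟫ =
      -(c * ∑ j ∈ T, -deriv ℓ (y j * ⟪w, x j⟫) * (y j * ⟪u, x j⟫)) := by
    simp only [marginGrad, real_inner_smul_right, inner_sum]
    rw [neg_mul_eq_mul_neg, ← Finset.sum_neg_distrib]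
    congr 1
    exact Finset.sum_congr rfl fun j _ => by ring
  calc c * (-deriv ℓ (y i * ⟪w, x i⟫) * (y i * ⟪u, x i⟫))
      ≤ c * ∑ j ∈ T, -deriv ℓ (y j * ⟪w, x j⟫) * (y j * ⟪u, x j⟫) :=
        mul_le_mul_of_nonneg_left (Finset.single_le_sum
          (f := fun j => -deriv ℓ (y j * ⟪w, x j⟫) * (y j * ⟪u, x j⟫))
          (fun j hj => mul_nonneg (neg_nonneg.2 (hℓ' _)) (hu j hj)) hi) hc
    _ = -⟪u, marginGrad ℓ x y c T w⟫ := by rw [hinner, neg_neg]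
    _ ≤ ‖u‖ * ‖marginGrad ℓ x y c T w‖ := (neg_le_abs _).trans (abs_real_inner_le_norm _ _)

theorem tendsto_deriv_margin_of_tendsto_marginGrad {α : Type*} {l : Filter α} {w : α → E}
    (hℓ' : ∀ z, deriv ℓ z ≤ 0) (hc : 0 < c) {u : E} (hu : ∀ j ∈ T, 0 ≤ y j * ⟪u, x j⟫) {i : ι}
    (hi : i ∈ T) (hui : 0 < y i * ⟪u, x i⟫)
    (hG : Tendsto (fun a => marginGrad ℓ x y c T (w a)) l (𝓝 0)) :
    Tendsto (fun a => deriv ℓ (y i * ⟪w a, x i⟫)) l (𝓝 0) := by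
  have hbound : Tendsto (fun a => -(‖u‖ * ‖marginGrad ℓ x y c T (w a)‖ / (c * (y i * ⟪u, x i⟫))))
      l (𝓝 0) := by
    simpa using ((hG.norm.const_mul ‖u‖).div_const (c * (y i * ⟪u, x i⟫))).neg
  refine tendsto_of_tendsto_of_tendsto_of_le_of_le hbound tendsto_const_nhds (fun a => ?_)
    (fun a => hℓ' _)
  rw [_root_.neg_le, le_div_iff₀ (mul_pos hc hui)]
  linarith [neg_deriv_mul_margin_le hℓ' hc.le hu hi (w a)]

variable [Fintype ι] [DecidableEq ι]

theorem exists_marginRisk_univ_lt (hanti : Antitone ℓ) (hlim : Tendsto ℓ atTop (𝓝 0))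
    (hc : 0 ≤ c) (hsep : ∀ i ∉ T, ∃ u : E, 0 < y i * ⟪u, x i⟫ ∧ ∀ j, 0 ≤ y j * ⟪u, x j⟫)
    (v : E) {ε : ℝ} (hε : 0 < ε) :
    ∃ p, marginRisk ℓ x y c Finset.univ p < marginRisk ℓ x y c T v + ε := by
  obtain ⟨u, hu, hupos⟩ :=
    exists_margin_nonneg_and_pos (C := Tᶜ) fun i hi => hsep i (Finset.mem_compl.1 hi)
  have hmargin : ∀ i (t : ℝ), y i * ⟪v + t • u, x i⟫ = y i * ⟪v, x i⟫ + t * (y i * ⟪u, x i⟫) :=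
    fun i t => by rw [inner_add_left, real_inner_smul_left]; ring
  have hT : ∀ t : ℝ, 0 ≤ t → marginRisk ℓ x y c T (v + t • u) ≤ marginRisk ℓ x y c T v :=
    fun t ht => mul_le_mul_of_nonneg_left (Finset.sum_le_sum fun i _ => hanti (by
      rw [hmargin]; exact le_add_of_nonneg_right (mul_nonneg ht (hu i)))) hc
  have hTc : Tendsto (fun t : ℝ => marginRisk ℓ x y c Tᶜ (v + t • u)) atTop (𝓝 0) := by
    simpa [marginRisk, hmargin] using (tendsto_finsetSum Tᶜ fun i hi => hlim.comp
      (tendsto_atTop_add_const_left _ _ (tendsto_id.atTop_mul_const (hupos i hi)))).const_mul c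
  obtain ⟨t, ht, htε⟩ := ((eventually_ge_atTop 0).and (hTc.eventually (gt_mem_nhds hε))).exists
  refine ⟨v + t • u, ?_⟩
  rw [← marginRisk_add_compl (T := T)]
  linarith [hT t ht]

variable [FiniteDimensional ℝ E]

theorem tendsto_starProjection_of_tendsto_marginGrad {α : Type*} {l : Filter α} {w : α → E}
    (hℓ : StrictConvexOn ℝ Set.univ ℓ) (hd : Differentiable ℝ ℓ) (hℓ' : ∀ z, deriv ℓ z ≤ 0)
    (hc : 0 < c) (hy : ∀ i ∈ T, y i ≠ 0)
    (hsep : ∀ i ∉ T, ∃ u : E, 0 < y i * ⟪u, x i⟫ ∧ ∀ j, 0 ≤ y j * ⟪u, x j⟫)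
    {v₀ : E} (hv₀ : v₀ ∈ span ℝ (x '' T))
    (hmin : IsMinOn (marginRisk ℓ x y c T) (span ℝ (x '' T)) v₀)
    (hG : Tendsto (fun a => marginGrad ℓ x y c Finset.univ (w a)) l (𝓝 0)) :
    Tendsto (fun a => (span ℝ (x '' T)).starProjection (w a)) l (𝓝 v₀) := by
  set P := (span ℝ (x '' T)).starProjection
  have hGc : Tendsto (fun a => marginGrad ℓ x y c Tᶜ (w a)) l (𝓝 0) := by
    have hterm : ∀ i ∈ Tᶜ, Tendsto (fun a => (deriv ℓ (y i * ⟪w a, x i⟫) * y i) • x i) l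
        (𝓝 0) := fun i hi => by
      obtain ⟨u, hui, hu⟩ := hsep i (Finset.mem_compl.1 hi)
      simpa using ((tendsto_deriv_margin_of_tendsto_marginGrad hℓ' hc (fun j _ => hu j)
        (Finset.mem_univ i) hui hG).mul_const (y i)).smul_const (x i)
    simpa [marginGrad] using (tendsto_finsetSum Tᶜ hterm).const_smul c
  have hGT : Tendsto (fun a => marginGrad ℓ x y c T (w a)) l (𝓝 0) := by
    have hdiff := hG.sub hGc
    rw [sub_zero] at hdiff
    have hP := (P.continuous.tendsto 0).comp hdiff
    rw [map_zero] at hP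
    refine hP.congr fun a => ?_
    rw [Function.comp_apply, ← marginGrad_add_compl, add_sub_cancel_right,
      starProjection_eq_self_iff.2 (marginGrad_mem_span _)]
  refine (strictConvexOn_marginRisk hℓ hc hy).tendsto_of_sub_le_mul_dist
    (span ℝ (x '' T)).closed_of_finiteDimensional
    (continuous_marginRisk hd.continuous).continuousOn hv₀ hmin
    (fun a => starProjection_apply_mem _ _) (tendsto_zero_iff_norm_tendsto_zero.1 hGT)
    fun a => ?_
  calc marginRisk ℓ x y c T (P (w a)) - marginRisk ℓ x y c T v₀
      ≤ ⟪marginGrad ℓ x y c T (P (w a)), P (w a) - v₀⟫ :=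
        marginRisk_sub_le_inner hℓ.convexOn hd hc.le _ _
    _ = ⟪marginGrad ℓ x y c T (w a), P (w a) - v₀⟫ := by
        rw [marginGrad_congr fun i hi => inner_starProjection_span_image (w a) hi]
    _ ≤ ‖marginGrad ℓ x y c T (w a)‖ * dist (P (w a)) v₀ := by
        rw [dist_eq_norm]
        exact real_inner_le_norm _ _

theorem tendsto_starProjection_of_isMinOn_closedBall {w : ℝ → E}
    (hℓ : StrictConvexOn ℝ Set.univ ℓ) (hℓc : Continuous ℓ) (hanti : Antitone ℓ)
    (hlim : Tendsto ℓ atTop (𝓝 0)) (hc : 0 < c) (hy : ∀ i ∈ T, y i ≠ 0)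
    (hsep : ∀ i ∉ T, ∃ u : E, 0 < y i * ⟪u, x i⟫ ∧ ∀ j, 0 ≤ y j * ⟪u, x j⟫)
    {v₀ : E} (hv₀ : v₀ ∈ span ℝ (x '' T))
    (hmin : IsMinOn (marginRisk ℓ x y c T) (span ℝ (x '' T)) v₀)
    (hw : ∀ B, 0 ≤ B → IsMinOn (marginRisk ℓ x y c Finset.univ) (Metric.closedBall 0 B) (w B)) :
    Tendsto (fun B => (span ℝ (x '' T)).starProjection (w B)) atTop (𝓝 v₀) := by
  have hℓ0 : ∀ z, 0 ≤ ℓ z := hanti.le_of_tendsto hlim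
  refine (strictConvexOn_marginRisk (x := x) hℓ hc hy).tendsto_of_tendsto_apply
    (span ℝ (x '' T)).closed_of_finiteDimensional (continuous_marginRisk hℓc).continuousOn hv₀ hmin
    (fun B => starProjection_apply_mem _ _) ?_
  refine tendsto_order.2 ⟨fun b hb => Eventually.of_forall fun B =>
    hb.trans_le (hmin (starProjection_apply_mem _ _)), fun b hb => ?_⟩
  obtain ⟨p, hp⟩ := exists_marginRisk_univ_lt hanti hlim hc.le hsep v₀ (sub_pos.2 hb)
  filter_upwards [eventually_ge_atTop ‖p‖] with B hB
  calc marginRisk ℓ x y c T ((span ℝ (x '' T)).starProjection (w B))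
      = marginRisk ℓ x y c T (w B) :=
        marginRisk_congr fun i hi => inner_starProjection_span_image (w B) hi
    _ ≤ marginRisk ℓ x y c Finset.univ (w B) := marginRisk_mono hℓ0 hc.le (Finset.subset_univ T) _
    _ ≤ marginRisk ℓ x y c Finset.univ p :=
        hw B ((norm_nonneg p).trans hB) (mem_closedBall_zero_iff.2 hB)
    _ < b := by linarith

end MarginRisk

open scoped Classical

theorem projections_converge_to_unique_minimizer_general
    {d n : ℕ} (hn : 0 < n)
    (x : Fin n → EuclideanSpace ℝ (Fin d)) (y : Fin n → ℝ)
    (hy : ∀ i, y i = 1 ∨ y i = -1)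
    (ℓ : ℝ → ℝ)
    (hanti : StrictAnti ℓ)
    (hlim0 : Tendsto ℓ atTop (nhds 0))
    (hC2 : ContDiff ℝ 2 ℓ)
    (hℓ'' : ∀ z : ℝ, 0 < deriv (deriv ℓ) z)
    (R : EuclideanSpace ℝ (Fin d) → ℝ)
    (hR : R = fun w => (1 / (n : ℝ)) * ∑ i, ℓ (y i * ⟪w, x i⟫))
    (InC : Fin n → Prop)
    (hInC : ∀ i, InC i ↔ ∃ u : EuclideanSpace ℝ (Fin d), ‖u‖ = 1 ∧
      0 < y i * ⟪u, x i⟫ ∧ ∀ j, 0 ≤ y j * ⟪u, x j⟫)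
    (S : Submodule ℝ (EuclideanSpace ℝ (Fin d)))
    (hS : S = Submodule.span ℝ {v | ∃ i, ¬ InC i ∧ x i = v})
    (Rs : EuclideanSpace ℝ (Fin d) → ℝ)
    (hRs : Rs = fun w =>
      (1 / (n : ℝ)) * ∑ i ∈ Finset.univ.filter (fun i => ¬ InC i),
        ℓ (y i * ⟪w, x i⟫))
    (vbar : EuclideanSpace ℝ (Fin d))
    (hvbar : vbar ∈ S ∧ ∀ v ∈ S, Rs vbar ≤ Rs v)
    (η : ℝ) (hη : 0 < η)
    (w : ℕ → EuclideanSpace ℝ (Fin d))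
    (hdesc : ∀ t : ℕ, R (w (t + 1)) - R (w t) ≤ -(η / 2) * ‖gradient R (w t)‖ ^ 2)
    (wbar : ℝ → EuclideanSpace ℝ (Fin d))
    (hwbar : ∀ B : ℝ, 0 ≤ B → ‖wbar B‖ ≤ B ∧ ∀ v, ‖v‖ ≤ B → R (wbar B) ≤ R v) :
    Tendsto (fun t : ℕ => (S.orthogonalProjection (w t) : EuclideanSpace ℝ (Fin d)))
      atTop (nhds vbar) ∧
    Tendsto (fun B : ℝ => (S.orthogonalProjection (wbar B) : EuclideanSpace ℝ (Fin d)))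
      atTop (nhds vbar) := by
  set Ds := Finset.univ.filter fun i => ¬ InC i
  obtain rfl : S = span ℝ (x '' Ds) := by
    rw [hS]
    congr 1
    ext v
    simp [Ds]
  obtain rfl : R = marginRisk ℓ x y (1 / n) Finset.univ := hR
  obtain rfl : Rs = marginRisk ℓ x y (1 / n) Ds := hRs
  have hd : Differentiable ℝ ℓ := hC2.differentiable (by norm_num)
  have hℓ : StrictConvexOn ℝ Set.univ ℓ :=
    strictConvexOn_univ_of_deriv2_pos hd.continuous (by simpa using hℓ'')
  have hc : (0 : ℝ) < 1 / n := by positivity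
  have hy' : ∀ i ∈ Ds, y i ≠ 0 := fun i _ => by rcases hy i with h | h <;> simp [h]
  have hsep : ∀ i ∉ Ds, ∃ u, 0 < y i * ⟪u, x i⟫ ∧ ∀ j, 0 ≤ y j * ⟪u, x j⟫ := fun i hi => by
    obtain ⟨u, -, hu⟩ := (hInC i).1 (by simpa [Ds] using hi)
    exact ⟨u, hu⟩
  have hmin : IsMinOn (marginRisk ℓ x y (1 / n) Ds) (span ℝ (x '' Ds)) vbar :=
    isMinOn_iff.2 hvbar.2
  have hgrad : ∀ v, gradient (marginRisk ℓ x y (1 / n) Finset.univ) v =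
      marginGrad ℓ x y (1 / n) Finset.univ v :=
    fun v => (hasGradientAt_marginRisk hd _ _ v).gradient
  have hwbar' : ∀ B, 0 ≤ B →
      IsMinOn (marginRisk ℓ x y (1 / n) Finset.univ) (Metric.closedBall 0 B) (wbar B) :=
    fun B hB => isMinOn_iff.2 fun v hv => (hwbar B hB).2 v (mem_closedBall_zero_iff.1 hv)
  have hgrad_sq := tendsto_zero_of_sub_le_neg_mul (half_pos hη)
    (fun t => marginRisk_nonneg (hanti.antitone.le_of_tendsto hlim0) hc.le (w t))
    (fun t => sq_nonneg _) (by simpa only [hgrad] using hdesc)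
  refine ⟨tendsto_starProjection_of_tendsto_marginGrad hℓ hd (fun _ => hanti.antitone.deriv_nonpos)
    hc hy' hsep hvbar.1 hmin (tendsto_zero_iff_norm_tendsto_zero.2 ?_),
    tendsto_starProjection_of_isMinOn_closedBall hℓ hd.continuous hanti.antitone hlim0 hc hy' hsep
      hvbar.1 hmin hwbar'⟩
  simpa using hgrad_sq.sqrt

/-- For a twice continuously differentiable loss with
`ℓ'' > 0` and an admissible step size, the projections onto
`S := span{xᵢ : i ∈ D_s}` of both the gradient-descent path and the
regularization path converge to the unique minimizer `v̄` of the partial risk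
`R_s` over `S`. -/
theorem projections_converge_to_unique_minimizer
    {d n : ℕ} (hn : 0 < n)
    (x : Fin n → EuclideanSpace ℝ (Fin d)) (y : Fin n → ℝ)
    (hx : ∀ i, ‖x i‖ ≤ 1) (hy : ∀ i, y i = 1 ∨ y i = -1)
    (ℓ : ℝ → ℝ)
    (hconv : ConvexOn ℝ Set.univ ℓ)
    (hanti : StrictAnti ℓ)
    (hlim0 : Tendsto ℓ atTop (nhds 0))
    (hC2 : ContDiff ℝ 2 ℓ)
    (hℓ'' : ∀ z : ℝ, 0 < deriv (deriv ℓ) z)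
    (R : EuclideanSpace ℝ (Fin d) → ℝ)
    (hR : R = fun w => (1 / (n : ℝ)) * ∑ i, ℓ (y i * ⟪w, x i⟫))
    (InC : Fin n → Prop)
    (hInC : ∀ i, InC i ↔ ∃ u : EuclideanSpace ℝ (Fin d), ‖u‖ = 1 ∧
      0 < y i * ⟪u, x i⟫ ∧ ∀ j, 0 ≤ y j * ⟪u, x j⟫)
    (S : Submodule ℝ (EuclideanSpace ℝ (Fin d)))
    (hS : S = Submodule.span ℝ {v | ∃ i, ¬ InC i ∧ x i = v})
    (Rs : EuclideanSpace ℝ (Fin d) → ℝ)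
    (hRs : Rs = fun w =>
      (1 / (n : ℝ)) * ∑ i ∈ Finset.univ.filter (fun i => ¬ InC i),
        ℓ (y i * ⟪w, x i⟫))
    (vbar : EuclideanSpace ℝ (Fin d))
    (hvbar : vbar ∈ S ∧ ∀ v ∈ S, Rs vbar ≤ Rs v)
    (η : ℝ) (hη : 0 < η)
    (w : ℕ → EuclideanSpace ℝ (Fin d))
    (hgd : ∀ t : ℕ, w (t + 1) = w t - η • gradient R (w t))
    (hη2 : η ≤ 1 / (2 * R (w 0)))
    (hdesc : ∀ t : ℕ, R (w (t + 1)) - R (w t) ≤ -(η / 2) * ‖gradient R (w t)‖ ^ 2)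
    (wbar : ℝ → EuclideanSpace ℝ (Fin d))
    (hwbar : ∀ B : ℝ, 0 ≤ B → ‖wbar B‖ ≤ B ∧ ∀ v, ‖v‖ ≤ B → R (wbar B) ≤ R v) :
    Tendsto (fun t : ℕ => (S.orthogonalProjection (w t) : EuclideanSpace ℝ (Fin d)))
      atTop (nhds vbar) ∧
    Tendsto (fun B : ℝ => (S.orthogonalProjection (wbar B) : EuclideanSpace ℝ (Fin d)))
      atTop (nhds vbar) :=
  projections_converge_to_unique_minimizer_general hn x y hy ℓ hanti hlim0 hC2 hℓ'' R hR InC hInC S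
    hS Rs hRs vbar hvbar η hη w hdesc wbar hwbar
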